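/- Let f : ℝⁿ × ℝ → ℝⁿ be smooth, let U : ℝ → ℝ be smooth with U''(ū) > 0 for all ū, and define F(x,ū) := ∫₀^ū U'(v) ∂_u f(x,v) dv. If for every ū ∈ ℝ and every x ∈ ℝⁿ the identity U'(ū) (div_x f)(x,ū) = (div_x F)(x,ū) holds, then f is geometry-compatible, i.e. (div_x f)(x,ū) = 0 for all x ∈ ℝⁿ and all ū ∈ ℝ. -/

import Mathlib

open MeasureTheory Set
open scoped ENNReal RealInnerProductSpace

/-- ℝⁿ as a Euclidean space. -/
abbrev Euc (n : ℕ) := EuclideanSpace ℝ (Fin n)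

/-- The measure on the spacetime slab `(0,∞) × ℝⁿ`. -/
noncomputable def spaceTime (n : ℕ) : Measure (ℝ × Euc n) :=
  ((volume : Measure ℝ).restrict (Set.Ioi 0)).prod (volume : Measure (Euc n))

/-- The divergence in `x` of the parametrized flux `f` at parameter `ub`. -/
noncomputable def divFlux (n : ℕ) (f : Euc n × ℝ → Euc n) (x : Euc n) (ub : ℝ) : ℝ :=
  ∑ i, fderiv ℝ (fun y => f (y, ub)) x (EuclideanSpace.single i 1) i

/-- A parametrized flux field `f : ℝⁿ × ℝ → ℝⁿ` is geometry-compatible if for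
each value of the parameter it is divergence free in `x`. -/
def GeometryCompatible (n : ℕ) (f : Euc n × ℝ → Euc n) : Prop :=
  ∀ (ub : ℝ) (x : Euc n), divFlux n f x ub = 0

/-- If a strictly convex entropy `U` admits an exact entropy flux `F`, in the
sense that `U'(ub) div_x f(x,ub) = div_x F(x,ub)` everywhere, then the flux `f`
is geometry-compatible. -/
theorem geometryCompatible_of_entropy_flux_identity
    (n : ℕ) (hn : 1 ≤ n) (f : Euc n × ℝ → Euc n) (hf : ContDiff ℝ (⊤ : ℕ∞) f)
    (U : ℝ → ℝ) (hU : ContDiff ℝ (⊤ : ℕ∞) U)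
    (hUconv : ∀ ub : ℝ, 0 < deriv (deriv U) ub)
    (F : Euc n × ℝ → Euc n)
    (hF : ∀ (x : Euc n) (ub : ℝ),
      F (x, ub) = ∫ v in (0:ℝ)..ub, deriv U v • deriv (fun w => f (x, w)) v)
    (hid : ∀ (ub : ℝ) (x : Euc n), deriv U ub * divFlux n f x ub = divFlux n F x ub) :
    GeometryCompatible n f := by
  classical
  -- basic smoothness facts
  have hf3 : ContDiff ℝ 3 f := hf.of_le (WithTop.coe_le_coe.2 le_top)
  have hfdiff : Differentiable ℝ f := hf3.differentiable (by norm_num)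
  have hfd : ContDiff ℝ 2 (fderiv ℝ f) := hf3.fderiv_right (by norm_num)
  have hfddiff : Differentiable ℝ (fderiv ℝ f) := hfd.differentiable (by norm_num)
  have hfdd : ContDiff ℝ 1 (fderiv ℝ (fderiv ℝ f)) := hfd.fderiv_right (by norm_num)
  have hU3 : ContDiff ℝ 3 U := hU.of_le (WithTop.coe_le_coe.2 le_top)
  have hU'2 : ContDiff ℝ 2 (deriv U) := by
    have h32 : (3 : WithTop ℕ∞) = 2 + 1 := by norm_num
    exact ((contDiff_succ_iff_deriv).1 (h32 ▸ hU3)).2.2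
  have hU'diff : Differentiable ℝ (deriv U) := hU'2.differentiable (by norm_num)
  set e : Fin n → Euc n := fun i => EuclideanSpace.single i 1 with he
  -- the u-derivative of f is the full derivative in direction (0,1)
  have hderiv_u : ∀ (x : Euc n) (v : ℝ),
      deriv (fun w => f (x, w)) v = fderiv ℝ f (x, v) ((0 : Euc n), (1 : ℝ)) := by
    intro x v
    have h1 : HasDerivAt (fun w : ℝ => ((x : Euc n), w)) ((0 : Euc n), (1 : ℝ)) v :=
      HasDerivAt.prodMk (hasDerivAt_const v x) (hasDerivAt_id v)
    exact ((hfdiff (x, v)).hasFDerivAt.comp_hasDerivAt v h1).deriv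
  -- the integrand of F
  set h : Euc n × ℝ → Euc n := fun p => deriv U p.2 • fderiv ℝ f p ((0 : Euc n), (1 : ℝ)) with hh
  have hFh : ∀ (x : Euc n) (ub : ℝ), F (x, ub) = ∫ v in (0:ℝ)..ub, h (x, v) := by
    intro x ub
    rw [hF]
    congr 1
    ext v
    rw [hderiv_u]
  have hsm : ContDiff ℝ 1 h :=
    ((hU'2.of_le (by norm_num)).comp contDiff_snd).smul
      ((hfd.of_le (by norm_num)).clm_apply contDiff_const)
  have hhdiff : Differentiable ℝ h := hsm.differentiable one_ne_zero
  have hDhcont : Continuous (fderiv ℝ h) := (hsm.fderiv_right (m := 0) (by norm_num)).continuous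
  -- pointwise formula for the x-derivative of h
  have hfderiv_h : ∀ (x : Euc n) (v : ℝ) (i : Fin n),
      fderiv ℝ h (x, v) (e i, (0:ℝ)) i
        = deriv U v * (fderiv ℝ (fderiv ℝ f) (x, v) ((0:Euc n), (1:ℝ)) (e i, (0:ℝ))) i := by
    intro x v i
    have hc : HasFDerivAt (fun p : Euc n × ℝ => deriv U p.2)
        ((deriv (deriv U) v) • ContinuousLinearMap.snd ℝ (Euc n) ℝ) (x, v) :=
      (hU'diff v).hasDerivAt.comp_hasFDerivAt (f := Prod.snd) (x, v) hasFDerivAt_snd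
    have hw : HasFDerivAt (fun p : Euc n × ℝ => fderiv ℝ f p ((0:Euc n), (1:ℝ)))
        ((fderiv ℝ f (x, v)).comp (0 : Euc n × ℝ →L[ℝ] Euc n × ℝ)
          + (fderiv ℝ (fderiv ℝ f) (x, v)).flip ((0:Euc n), (1:ℝ))) (x, v) :=
      (hfddiff (x, v)).hasFDerivAt.clm_apply (hasFDerivAt_const _ _)
    have hT : fderiv ℝ h (x, v) = deriv U v •
        ((fderiv ℝ f (x, v)).comp (0 : Euc n × ℝ →L[ℝ] Euc n × ℝ)
          + (fderiv ℝ (fderiv ℝ f) (x, v)).flip ((0:Euc n), (1:ℝ)))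
        + ((deriv (deriv U) v) • ContinuousLinearMap.snd ℝ (Euc n) ℝ).smulRight
            (fderiv ℝ f (x, v) ((0:Euc n), (1:ℝ))) := (hc.smul hw).fderiv
    rw [hT]
    have hsymm : fderiv ℝ (fderiv ℝ f) (x, v) (e i, (0:ℝ)) ((0:Euc n), (1:ℝ))
        = fderiv ℝ (fderiv ℝ f) (x, v) ((0:Euc n), (1:ℝ)) (e i, (0:ℝ)) :=
      (hf3.contDiffAt.isSymmSndFDerivAt (by norm_num)) _ _
    simp [ContinuousLinearMap.flip_apply, hsymm]
  -- divFlux of f in terms of the full derivative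
  have hG : ∀ (x : Euc n) (v : ℝ),
      divFlux n f x v = ∑ i, fderiv ℝ f (x, v) (e i, (0:ℝ)) i := by
    intro x v
    unfold divFlux
    refine Finset.sum_congr rfl fun i _ => ?_
    have hcomp : HasFDerivAt (fun y : Euc n => f (y, v))
        ((fderiv ℝ f (x, v)).comp (ContinuousLinearMap.inl ℝ (Euc n) ℝ)) x :=
      (hfdiff (x, v)).hasFDerivAt.comp x (hasFDerivAt_prodMk_left x v)
    rw [hcomp.fderiv]
    simp [he]
  -- the v-derivative of divFlux f x ·
  have hGderiv : ∀ (x : Euc n) (v : ℝ),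
      HasDerivAt (fun v => ∑ i, fderiv ℝ f (x, v) (e i, (0:ℝ)) i)
        (∑ i, fderiv ℝ (fderiv ℝ f) (x, v) ((0:Euc n), (1:ℝ)) (e i, (0:ℝ)) i) v := by
    intro x v
    apply HasDerivAt.fun_sum
    intro i _
    have h1 : HasDerivAt (fun w : ℝ => ((x : Euc n), w)) ((0 : Euc n), (1 : ℝ)) v :=
      HasDerivAt.prodMk (hasDerivAt_const v x) (hasDerivAt_id v)
    have h3 : HasDerivAt (fun w => fderiv ℝ f (x, w))
        (fderiv ℝ (fderiv ℝ f) (x, v) ((0:Euc n), (1:ℝ))) v :=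
      (hfddiff (x, v)).hasFDerivAt.comp_hasDerivAt v h1
    have h4 := ((EuclideanSpace.proj i).comp
        (ContinuousLinearMap.apply ℝ (Euc n)
          ((e i, (0:ℝ)) : Euc n × ℝ))).hasFDerivAt.comp_hasDerivAt v h3
    simpa [Function.comp_def] using h4
  -- continuity of the second-derivative integrand
  have hG'cont : ∀ x : Euc n, Continuous (fun v : ℝ =>
      ∑ i, fderiv ℝ (fderiv ℝ f) (x, v) ((0:Euc n), (1:ℝ)) (e i, (0:ℝ)) i) := by
    intro x
    apply continuous_finset_sum
    intro i _
    have hbase : Continuous (fun v : ℝ => fderiv ℝ (fderiv ℝ f) (x, v)) :=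
      hfdd.continuous.comp (continuous_const.prodMk continuous_id)
    exact (EuclideanSpace.proj i).continuous.comp
      ((hbase.clm_apply continuous_const).clm_apply continuous_const)
  -- differentiation under the integral sign
  have key : ∀ (x₀ : Euc n) (ub : ℝ),
      HasFDerivAt (fun y => ∫ v in (0:ℝ)..ub, h (y, v))
        (∫ v in (0:ℝ)..ub,
          (fderiv ℝ h (x₀, v)).comp (ContinuousLinearMap.inl ℝ (Euc n) ℝ)) x₀ := by
    intro x₀ ub
    have hDcont : Continuous fun p : Euc n × ℝ =>
        (fderiv ℝ h p).comp (ContinuousLinearMap.inl ℝ (Euc n) ℝ) :=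
      hDhcont.clm_comp continuous_const
    obtain ⟨C, hC⟩ : ∃ C, ∀ p ∈ Metric.closedBall x₀ 1 ×ˢ uIcc (0:ℝ) ub,
        ‖(fderiv ℝ h p).comp (ContinuousLinearMap.inl ℝ (Euc n) ℝ)‖ ≤ C :=
      ((isCompact_closedBall x₀ 1).prod isCompact_uIcc).exists_bound_of_continuousOn
        hDcont.continuousOn
    refine intervalIntegral.hasFDerivAt_integral_of_dominated_of_fderiv_le
      (F := fun y v => h (y, v))
      (F' := fun y v => (fderiv ℝ h (y, v)).comp (ContinuousLinearMap.inl ℝ (Euc n) ℝ))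
      (bound := fun _ => C) (s := Metric.ball x₀ 1) (Metric.ball_mem_nhds x₀ one_pos) ?_ ?_ ?_ ?_ ?_ ?_
    · exact Filter.Eventually.of_forall fun y =>
        ((hsm.continuous.comp (continuous_const.prodMk continuous_id)).aestronglyMeasurable)
    · exact (hsm.continuous.comp (continuous_const.prodMk continuous_id)).intervalIntegrable _ _
    · exact ((hDcont.comp (continuous_const.prodMk continuous_id)).aestronglyMeasurable)
    · refine Filter.Eventually.of_forall fun t ht y hy => ?_
      exact hC (y, t) ⟨Metric.ball_subset_closedBall hy, uIoc_subset_uIcc ht⟩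
    · exact intervalIntegrable_const
    · refine Filter.Eventually.of_forall fun t ht y hy => ?_
      exact (hhdiff (y, t)).hasFDerivAt.comp (f := fun e => (e, t)) y (hasFDerivAt_prodMk_left y t)
  -- computation of divFlux F
  have hdivF : ∀ (x₀ : Euc n) (ub : ℝ), divFlux n F x₀ ub
      = ∫ v in (0:ℝ)..ub, deriv U v *
          (∑ i, fderiv ℝ (fderiv ℝ f) (x₀, v) ((0:Euc n), (1:ℝ)) (e i, (0:ℝ)) i) := by
    intro x₀ ub
    have hDcont : Continuous fun v : ℝ =>
        (fderiv ℝ h (x₀, v)).comp (ContinuousLinearMap.inl ℝ (Euc n) ℝ) :=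
      (hDhcont.clm_comp continuous_const).comp (continuous_const.prodMk continuous_id)
    have hint : IntervalIntegrable
        (fun v : ℝ => (fderiv ℝ h (x₀, v)).comp (ContinuousLinearMap.inl ℝ (Euc n) ℝ))
        volume 0 ub := hDcont.intervalIntegrable _ _
    have hfun : (fun y => F (y, ub)) = fun y => ∫ v in (0:ℝ)..ub, h (y, v) :=
      funext fun y => hFh y ub
    unfold divFlux
    rw [hfun, (key x₀ ub).fderiv]
    have step1 : ∀ i : Fin n,
        (∫ v in (0:ℝ)..ub,
            (fderiv ℝ h (x₀, v)).comp (ContinuousLinearMap.inl ℝ (Euc n) ℝ))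
          (EuclideanSpace.single i 1) i
        = ∫ v in (0:ℝ)..ub, fderiv ℝ h (x₀, v) (e i, (0:ℝ)) i := by
      intro i
      rw [ContinuousLinearMap.intervalIntegral_apply hint (EuclideanSpace.single i 1)]
      have hint2 : IntervalIntegrable (fun v : ℝ =>
          ((fderiv ℝ h (x₀, v)).comp (ContinuousLinearMap.inl ℝ (Euc n) ℝ))
            (EuclideanSpace.single i 1)) volume 0 ub :=
        (hDcont.clm_apply continuous_const).intervalIntegrable _ _
      have h5 := ContinuousLinearMap.intervalIntegral_comp_comm
        (𝕜 := ℝ) (EuclideanSpace.proj i) hint2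
      refine h5.symm.trans (intervalIntegral.integral_congr fun v _ => ?_)
      simp [he]
    calc
      ∑ i, (∫ v in (0:ℝ)..ub,
            (fderiv ℝ h (x₀, v)).comp (ContinuousLinearMap.inl ℝ (Euc n) ℝ))
          (EuclideanSpace.single i 1) i
        = ∑ i, ∫ v in (0:ℝ)..ub, fderiv ℝ h (x₀, v) (e i, (0:ℝ)) i :=
          Finset.sum_congr rfl fun i _ => step1 i
      _ = ∫ v in (0:ℝ)..ub, ∑ i, fderiv ℝ h (x₀, v) (e i, (0:ℝ)) i := by
          rw [← intervalIntegral.integral_finset_sum]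
          intro i _
          exact ((EuclideanSpace.proj i).continuous.comp
            ((hDhcont.comp (continuous_const.prodMk continuous_id)).clm_apply
              continuous_const)).intervalIntegrable _ _
      _ = ∫ v in (0:ℝ)..ub, deriv U v *
            (∑ i, fderiv ℝ (fderiv ℝ f) (x₀, v) ((0:Euc n), (1:ℝ)) (e i, (0:ℝ)) i) := by
          refine intervalIntegral.integral_congr fun v _ => ?_
          rw [Finset.mul_sum]
          exact Finset.sum_congr rfl fun i _ => hfderiv_h x₀ v i
  -- conclusion
  intro ub x
  have hEq : (fun u => deriv U u * divFlux n f x u)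
      = fun u => ∫ v in (0:ℝ)..u, deriv U v *
          (∑ i, fderiv ℝ (fderiv ℝ f) (x, v) ((0:Euc n), (1:ℝ)) (e i, (0:ℝ)) i) :=
    funext fun u => (hid u x).trans (hdivF x u)
  have hcontInt : Continuous fun v : ℝ => deriv U v *
      (∑ i, fderiv ℝ (fderiv ℝ f) (x, v) ((0:Euc n), (1:ℝ)) (e i, (0:ℝ)) i) :=
    (hU'2.continuous).mul (hG'cont x)
  have hR : HasDerivAt (fun u => ∫ v in (0:ℝ)..u, deriv U v *
        (∑ i, fderiv ℝ (fderiv ℝ f) (x, v) ((0:Euc n), (1:ℝ)) (e i, (0:ℝ)) i))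
      (deriv U ub *
        (∑ i, fderiv ℝ (fderiv ℝ f) (x, ub) ((0:Euc n), (1:ℝ)) (e i, (0:ℝ)) i)) ub :=
    (hcontInt.integral_hasStrictDerivAt 0 ub).hasDerivAt
  have hGd : HasDerivAt (fun u => divFlux n f x u)
      (∑ i, fderiv ℝ (fderiv ℝ f) (x, ub) ((0:Euc n), (1:ℝ)) (e i, (0:ℝ)) i) ub := by
    have hfx : (fun u => divFlux n f x u)
        = fun u => ∑ i, fderiv ℝ f (x, u) (e i, (0:ℝ)) i := funext fun u => hG x u
    rw [hfx]
    exact hGderiv x ub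
  have hL : HasDerivAt (fun u => deriv U u * divFlux n f x u)
      (deriv (deriv U) ub * divFlux n f x ub + deriv U ub *
        (∑ i, fderiv ℝ (fderiv ℝ f) (x, ub) ((0:Euc n), (1:ℝ)) (e i, (0:ℝ)) i)) ub :=
    (hU'diff ub).hasDerivAt.mul hGd
  rw [hEq] at hL
  have huniq := hL.unique hR
  have hzero : deriv (deriv U) ub * divFlux n f x ub = 0 := by linarith
  rcases mul_eq_zero.1 hzero with h0 | h0
  · exact absurd h0 (ne_of_gt (hUconv ub))
  · exact h0
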